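/- Consider the planar ODE ẋ = c₁κ̄₁ + c₂κ̄₂x^p y^q + c₃κ̄₃x^q y^p, ẏ = K(d₁κ̄₁ + d₂κ̄₂x^p y^q + d₃κ̄₃x^q y^p) on ℝ₊², where κ̄₁ = λ(c₂d₃−c₃d₂), κ̄₂ = λ(c₃d₁−c₁d₃), κ̄₃ = λ(c₁d₂−c₂d₁) for some λ ≠ 0. Assume (i) p² > q²; (ii) sgn c₁ = −sgn d₁ = sgn d₂ = −sgn c₃ ≠ 0; (iii) sgn c₂ = −sgn d₃; (iv) K = −c₁/d₁; and, in the case sgn c₂ = −sgn d₃ ≠ 0, additionally |d₃/c₃| < |d₁/c₁| < |d₂/c₂| and |d₁/c₁| = √(|d₂/c₂|·|d₃/c₃|). Then (1,1) is a center: there exists an open neighborhood U ⊆ ℝ₊² of (1,1) such that every solution of the ODE starting at a point of U \ {(1,1)} is a nonconstant periodic solution. -/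

import Mathlib

/-!
After the substitution of the `κᵢ`, the hypotheses turn the vector field into
`(P(x, y), -P(y, x))` with `P = A (x^p y^q - 1) + B (x^q y^p - 1)`, `A = c₂κ₂`, `B = c₃κ₃` and
`A² < B²`. This field is reversible: the swap `(x, y) ↦ (y, x)` maps solutions to solutions run
backwards. Its linearisation at `(1, 1)` has eigenvalues `±iω` with
`ω² = (p² - q²)(B² - A²) > 0`, so in a complex eigen-coordinate a solution close to `(1, 1)`
turns around it at angular speed between `ω/2` and `3ω/2` and meets the diagonal, the fixed line
of the swap, at two times `t₁ < t₂` in two distinct points. By uniqueness the orbit is symmetric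
about both times, and the composition of the two time reflections is the translation by
`2 (t₂ - t₁)`, a period.
-/

open Set Filter Topology Real ContinuousLinearMap Asymptotics
open Complex (I ofRealCLM)

theorem ODE_solution_unique_univ_of_contDiffAt {E : Type*} [NormedAddCommGroup E]
    [NormedSpace ℝ E] {v : E → E} {s : Set E} (hv : ∀ z ∈ s, ContDiffAt ℝ 1 v z)
    {γ δ : ℝ → E} (hγ : ∀ t, HasDerivAt γ (v (γ t)) t ∧ γ t ∈ s)
    (hδ : ∀ t, HasDerivAt δ (v (δ t)) t ∧ δ t ∈ s) {t₀ : ℝ} (heq : γ t₀ = δ t₀) : γ = δ := by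
  have hcont : ∀ {f : ℝ → E}, (∀ t, HasDerivAt f (v (f t)) t ∧ f t ∈ s) → Continuous f :=
    fun hf => continuous_iff_continuousAt.mpr fun t => (hf t).1.continuousAt
  have hopen : IsOpen {t | γ t = δ t} := isOpen_iff_mem_nhds.mpr fun τ (hτ : γ τ = δ τ) => by
    obtain ⟨K, B, hB, hlip⟩ := (hv _ (hγ τ).2).exists_lipschitzOnWith
    have hnear : ∀ {f : ℝ → E}, (∀ t, HasDerivAt f (v (f t)) t ∧ f t ∈ s) → f τ = γ τ →
        ∀ᶠ t in 𝓝 τ, HasDerivAt f (v (f t)) t ∧ f t ∈ B := fun hf hfτ => by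
      filter_upwards [(hcont hf).continuousAt.preimage_mem_nhds (hfτ ▸ hB)] with t ht
      exact ⟨(hf t).1, ht⟩
    exact ODE_solution_unique_of_eventually (v := fun _ => v) (s := fun _ => B)
      (.of_forall fun _ => hlip) (hnear hγ rfl) (hnear hδ hτ.symm) hτ
  have := (IsClopen.eq_univ ⟨isClosed_eq (hcont hγ) (hcont hδ), hopen⟩ ⟨t₀, heq⟩)
  exact funext fun t => (this ▸ mem_univ t : t ∈ {t | γ t = δ t})

theorem ODE_solution_eq_comp_reflect {E : Type*} [NormedAddCommGroup E]
    [NormedSpace ℝ E] {v : E → E} {s : Set E} (hv : ∀ z ∈ s, ContDiffAt ℝ 1 v z)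
    {σ : E →L[ℝ] E} (hσs : ∀ z ∈ s, σ z ∈ s) (hrev : ∀ z ∈ s, v (σ z) = -σ (v z))
    {γ : ℝ → E} (hγ : ∀ t, HasDerivAt γ (v (γ t)) t ∧ γ t ∈ s) {t₀ : ℝ}
    (hfix : σ (γ t₀) = γ t₀) (t : ℝ) : γ t = σ (γ (2 * t₀ - t)) := by
  refine congrFun (ODE_solution_unique_univ_of_contDiffAt hv hγ (fun t => ⟨?_, hσs _ (hγ _).2⟩)
    (t₀ := t₀) (by simp [two_mul, hfix])) t
  have hrefl : HasDerivAt (fun t => 2 * t₀ - t) (-1) t := by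
    simpa using (hasDerivAt_id t).const_sub (2 * t₀)
  have := σ.hasFDerivAt.comp_hasDerivAt t (((hγ _).1).scomp t hrefl)
  simpa [Function.comp_def, hrev _ (hγ _).2] using this

theorem Function.periodic_of_eq_comp_reflect {α : Type*} {γ : ℝ → α} {σ : α → α} {t₁ t₂ : ℝ}
    (h₁ : ∀ t, γ t = σ (γ (2 * t₁ - t))) (h₂ : ∀ t, γ t = σ (γ (2 * t₂ - t))) :
    Function.Periodic γ (2 * (t₂ - t₁)) := fun t => by
  rw [h₂, show 2 * t₂ - (t + 2 * (t₂ - t₁)) = 2 * t₁ - t by ring, ← h₁]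

theorem norm_lt_of_norm_deriv_le_of_norm_le {E : Type*} [NormedAddCommGroup E]
    [NormedSpace ℝ E] {f f' : ℝ → E} {K R Θ : ℝ} (hf : ∀ t, HasDerivAt f (f' t) t) (hK : 0 ≤ K)
    (hf' : ∀ t, ‖f t‖ ≤ R → ‖f' t‖ ≤ K * ‖f t‖) (h₀ : ‖f 0‖ * exp (K * Θ) < R) :
    ∀ t ∈ Icc 0 Θ, ‖f t‖ < R := by
  by_contra! hexit
  have hcont : Continuous f := continuous_iff_continuousAt.mpr fun t => (hf t).continuousAt
  set S := {t ∈ Icc 0 Θ | R ≤ ‖f t‖}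
  have hS : IsClosed S := isClosed_Icc.inter (isClosed_le continuous_const hcont.norm)
  obtain ⟨⟨hτ₀, hτΘ⟩, hτR⟩ : sInf S ∈ S := hS.csInf_mem hexit ⟨0, fun t ht => ht.1.1⟩
  have hbefore : ∀ t ∈ Ico 0 (sInf S), ‖f t‖ < R := fun t ht => by
    by_contra! h
    exact ht.2.not_ge (csInf_le ⟨0, fun t ht => ht.1.1⟩ ⟨⟨ht.1, ht.2.le.trans hτΘ⟩, h⟩)
  have hgronwall := norm_le_gronwallBound_of_norm_deriv_right_le hcont.continuousOn
    (fun t _ => (hf t).hasDerivWithinAt) le_rfl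
    (K := K) (ε := 0) (fun t ht => by simpa using hf' t (hbefore t ht).le) (sInf S) ⟨hτ₀, le_rfl⟩
  rw [gronwallBound_ε0, sub_zero] at hgronwall
  have : exp (K * sInf S) ≤ exp (K * Θ) := exp_le_exp.mpr (mul_le_mul_of_nonneg_left hτΘ hK)
  nlinarith [norm_nonneg (f 0)]

theorem exists_hasDerivAt_eq_mul_exp {f f' : ℝ → ℂ} (hf : ∀ t, HasDerivAt f (f' t) t)
    (hf₀ : ∀ t, f t ≠ 0) (hc : Continuous fun t => f' t / f t) :
    ∃ g : ℝ → ℂ, (∀ t, HasDerivAt g (f' t / f t) t) ∧ ∀ t, f t = f 0 * Complex.exp (g t) := by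
  set g := fun t => ∫ s in (0 : ℝ)..t, f' s / f s
  have hg : ∀ t, HasDerivAt g (f' t / f t) t := fun t =>
    (hc.integral_hasStrictDerivAt 0 t).hasDerivAt
  refine ⟨g, hg, fun t => ?_⟩
  have hconst : ∀ t, HasDerivAt (fun t => f t * Complex.exp (-g t)) 0 t := fun t => by
    refine ((hf t).mul (hg t).neg.cexp).congr_deriv ?_
    field_simp [hf₀ t]
    ring
  have := is_const_of_deriv_eq_zero (fun t => (hconst t).differentiableAt)
    (fun t => (hconst t).deriv) t 0
  simp only [g, intervalIntegral.integral_same, neg_zero, Complex.exp_zero, mul_one] at this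
  rw [← this, mul_assoc, ← Complex.exp_add, neg_add_cancel, Complex.exp_zero, mul_one]

theorem exists_lt_im_eq_zero_of_add_two_pi_le {f : ℝ → ℂ} {ρ θ : ℝ → ℝ} {a b : ℝ}
    (hab : a ≤ b) (hθ : Continuous θ) (hρ : ∀ t, 0 < ρ t)
    (hf : ∀ t, f t = ρ t * Complex.exp (θ t * I)) (hθab : θ a + 2 * π ≤ θ b) :
    ∃ t₁ t₂, t₁ < t₂ ∧ (f t₁).im = 0 ∧ (f t₂).im = 0 ∧ f t₁ ≠ f t₂ := by
  set k := ⌈θ a / π⌉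
  have hk₁ : θ a ≤ k * π := (div_le_iff₀ pi_pos).mp (Int.le_ceil _)
  have hk₂ : k * π < θ a + π := by
    have := Int.ceil_lt_add_one (θ a / π)
    rw [div_add_one pi_ne_zero, lt_div_iff₀ pi_pos] at this
    exact this
  obtain ⟨t₁, ⟨-, ht₁b⟩, h₁⟩ :=
    intermediate_value_Icc hab hθ.continuousOn ⟨hk₁, by linarith [pi_pos]⟩
  obtain ⟨t₂, ⟨ht₁₂, -⟩, h₂⟩ : ∃ t₂ ∈ Icc t₁ b, θ t₂ = k * π + π :=
    intermediate_value_Icc ht₁b hθ.continuousOn ⟨by linarith [pi_pos], by linarith⟩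
  have him : ∀ t, (f t).im = ρ t * sin (θ t) := fun t => by
    simp [hf, Complex.exp_ofReal_mul_I_im]
  have hre : ∀ t, (f t).re = ρ t * cos (θ t) := fun t => by
    simp [hf, Complex.exp_ofReal_mul_I_re]
  have hsin₁ : sin (θ t₁) = 0 := h₁ ▸ sin_int_mul_pi k
  have hcos₂ : cos (θ t₂) = -cos (θ t₁) := by rw [h₂, ← h₁, cos_add_pi]
  have hcos₁ : cos (θ t₁) ^ 2 = 1 := by nlinarith [sin_sq_add_cos_sq (θ t₁)]
  refine ⟨t₁, t₂, ht₁₂.lt_of_ne fun h => ?_, by rw [him, hsin₁, mul_zero], ?_, fun h => ?_⟩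
  · rw [← h, h₁] at h₂; linarith [pi_pos]
  · rw [him, h₂, ← h₁, sin_add_pi, hsin₁, neg_zero, mul_zero]
  · have := congrArg Complex.re h
    rw [hre, hre, hcos₂] at this
    have hsum : (ρ t₁ + ρ t₂) * cos (θ t₁) ^ 2 = 0 := by linear_combination cos (θ t₁) * this
    rw [hcos₁] at hsum
    linarith [hρ t₁, hρ t₂]

theorem half_le_im_rotation_add_div {ω : ℝ} {z e : ℂ} (hz : z ≠ 0) (he : ‖e‖ ≤ ω / 2 * ‖z‖) :
    ω / 2 ≤ ((I * ω * z + e) / z).im := by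
  have hsplit : (I * ω * z + e) / z = I * ω + e / z := by field_simp [hz]
  have he' : ‖e / z‖ ≤ ω / 2 := by rwa [norm_div, div_le_iff₀ (norm_pos_iff.mpr hz)]
  rw [hsplit, Complex.add_im]
  simp only [Complex.mul_im, Complex.I_re, Complex.ofReal_im, Complex.I_im, Complex.ofReal_re]
  linarith [neg_le_of_abs_le ((Complex.abs_im_le_norm (e / z)).trans he')]

theorem exists_lt_im_eq_zero_of_hasDerivAt_rotation {ω R : ℝ} (hω : 0 < ω) {f E : ℝ → ℂ}
    (hf : ∀ t, HasDerivAt f (I * ω * f t + E t) t) (hE : Continuous E)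
    (hEf : ∀ t, ‖f t‖ ≤ R → ‖E t‖ ≤ ω / 2 * ‖f t‖) (hf₀ : ∀ t, f t ≠ 0)
    (h₀ : ‖f 0‖ * exp (6 * π) < R) :
    ∃ t₁ t₂, t₁ < t₂ ∧ (f t₁).im = 0 ∧ (f t₂).im = 0 ∧ f t₁ ≠ f t₂ := by
  -- On `[0, Θ]` the argument of `f` gains at least `ω/2 · Θ = 2π`, and Gronwall's bound with rate
  -- `3ω/2` keeps `‖f‖` below `‖f 0‖ exp (3ω/2 · Θ) = ‖f 0‖ exp (6π)`.
  set Θ := 4 * π / ω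
  have hΘ : 0 < Θ := by positivity
  have hnorm : ∀ t, ‖I * ω * f t‖ = ω * ‖f t‖ := fun t => by simp [hω.le]
  have hbound : ∀ t ∈ Icc 0 Θ, ‖f t‖ < R := by
    refine norm_lt_of_norm_deriv_le_of_norm_le hf (K := 3 * ω / 2) (by positivity)
      (fun t ht => ?_) (by rwa [show 3 * ω / 2 * Θ = 6 * π by simp only [Θ]; field_simp; ring])
    linarith [norm_add_le (I * ω * f t) (E t), hnorm t, hEf t ht]
  have hfc : Continuous f := continuous_iff_continuousAt.mpr fun t => (hf t).continuousAt
  obtain ⟨g, hg, hfg⟩ :=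
    exists_hasDerivAt_eq_mul_exp hf hf₀ (((continuous_const.mul hfc).add hE).div hfc hf₀)
  set θ := fun t => Complex.arg (f 0) + (g t).im
  have hθ : ∀ t, HasDerivAt θ ((I * ω * f t + E t) / f t).im t := fun t =>
    (Complex.imCLM.hasFDerivAt.comp_hasDerivAt t (hg t)).const_add _
  have hθc : Continuous θ := continuous_iff_continuousAt.mpr fun t => (hθ t).continuousAt
  have hθ' : ∀ t ∈ Icc 0 Θ, ω / 2 ≤ ((I * ω * f t + E t) / f t).im := fun t ht =>
    half_le_im_rotation_add_div (hf₀ t) (hEf t (hbound t ht).le)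
  have hincr : θ 0 + 2 * π ≤ θ Θ := by
    have := (convex_Icc 0 Θ).mul_sub_le_image_sub_of_le_deriv hθc.continuousOn
      (fun t _ => (hθ t).differentiableAt.differentiableWithinAt)
      (fun t ht => (hθ t).deriv ▸ hθ' t (interior_subset ht)) 0 ⟨le_rfl, hΘ.le⟩ Θ
      ⟨hΘ.le, le_rfl⟩ hΘ.le
    rw [show ω / 2 * (Θ - 0) = 2 * π by simp only [Θ]; field_simp; ring] at this
    linarith
  refine exists_lt_im_eq_zero_of_add_two_pi_le (ρ := fun t => ‖f 0‖ * exp (g t).re) hΘ.le hθc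
    (fun t => mul_pos (norm_pos_iff.mpr (hf₀ 0)) (exp_pos _)) (fun t => ?_) hincr
  rw [hfg t]
  conv_lhs => rw [← Complex.norm_mul_exp_arg_mul_I (f 0), ← Complex.re_add_im (g t)]
  push_cast [Complex.ofReal_exp]
  rw [mul_assoc, ← Complex.exp_add, mul_assoc, ← Complex.exp_add]
  push_cast [θ]
  ring_nf

/-- The linear part at a point of the diagonal of any field `v` with `v ∘ swap = -swap ∘ v`. -/
def swapReversibleCLM (a b : ℝ) : ℝ × ℝ →L[ℝ] ℝ × ℝ :=
  (a • fst ℝ ℝ ℝ + b • snd ℝ ℝ ℝ).prod (-(b • fst ℝ ℝ ℝ + a • snd ℝ ℝ ℝ))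

@[simp]
theorem swapReversibleCLM_apply (a b : ℝ) (x : ℝ × ℝ) :
    swapReversibleCLM a b x = (a * x.1 + b * x.2, -(b * x.1 + a * x.2)) := by
  simp [swapReversibleCLM]

/-- `b u + (a - ωi) v` is an eigen-covector of `swapReversibleCLM a b` for `iω` when
`ω² = b² - a²`; dividing by its value `a + b - ωi` at `(1, 1)` sends the diagonal to `ℝ`. -/
noncomputable def centerCoord (a b ω : ℝ) : ℝ × ℝ →L[ℝ] ℂ :=
  ((b : ℂ) / (a + b - ω * I)) • (ofRealCLM ∘L fst ℝ ℝ ℝ)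
    + ((a - ω * I) / (a + b - ω * I)) • (ofRealCLM ∘L snd ℝ ℝ ℝ)

@[simp]
theorem centerCoord_apply (a b ω : ℝ) (x : ℝ × ℝ) :
    centerCoord a b ω x = (b * x.1 + (a - ω * I) * x.2) / (a + b - ω * I) := by
  simp [centerCoord]
  ring

theorem centerCoord_swapReversibleCLM {a b ω : ℝ} (h : ω ^ 2 = b ^ 2 - a ^ 2) (x : ℝ × ℝ) :
    centerCoord a b ω (swapReversibleCLM a b x) = I * ω * centerCoord a b ω x := by
  have h' : (ω : ℂ) ^ 2 = b ^ 2 - a ^ 2 := by exact_mod_cast h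
  simp only [centerCoord_apply, swapReversibleCLM_apply, mul_div_assoc']
  congr 1
  push_cast
  linear_combination (-(x.2 : ℂ)) * h' + ω ^ 2 * x.2 * Complex.I_sq

theorem centerCoord_diag {a b ω : ℝ} (hω : ω ≠ 0) (r : ℝ) : centerCoord a b ω (r, r) = r := by
  have : (a + b - ω * I : ℂ) ≠ 0 := fun h => hω (by simpa using congrArg Complex.im h)
  rw [centerCoord_apply, div_eq_iff this]
  ring

theorem centerCoord_injective {a b ω : ℝ} (hω : ω ≠ 0) (hb : b ≠ 0) :
    Function.Injective (centerCoord a b ω) := by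
  refine (injective_iff_map_eq_zero _).mpr fun x hx => ?_
  have : (a + b - ω * I : ℂ) ≠ 0 := fun h => hω (by simpa using congrArg Complex.im h)
  rw [centerCoord_apply, div_eq_zero_iff, or_iff_left this] at hx
  have h₂ : x.2 = 0 := by simpa [hω] using congrArg Complex.im hx
  have h₁ : x.1 = 0 := by simpa [h₂, hb] using congrArg Complex.re hx
  exact Prod.ext h₁ h₂

theorem swap_eq_of_im_centerCoord_eq_zero {a b ω : ℝ} (hω : ω ≠ 0) (hb : b ≠ 0) {x : ℝ × ℝ}
    (h : (centerCoord a b ω x).im = 0) : x.swap = x := by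
  have : x = ((centerCoord a b ω x).re, (centerCoord a b ω x).re) :=
    centerCoord_injective hω hb <| by rw [centerCoord_diag hω]; exact Complex.ext rfl h
  rw [this]; rfl

theorem exists_norm_centerCoord_sub_le {v : ℝ × ℝ → ℝ × ℝ} {z₀ : ℝ × ℝ} {a b ω : ℝ}
    (hv₀ : v z₀ = 0) (hL : HasFDerivAt v (swapReversibleCLM a b) z₀) (hω : 0 < ω) (hb : b ≠ 0)
    (hωab : ω ^ 2 = b ^ 2 - a ^ 2) :
    ∃ R > 0, ∀ z, ‖centerCoord a b ω (z - z₀)‖ ≤ R →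
      ‖centerCoord a b ω (v z) - I * ω * centerCoord a b ω (z - z₀)‖
        ≤ ω / 2 * ‖centerCoord a b ω (z - z₀)‖ := by
  set ζ := centerCoord a b ω
  obtain ⟨K, -, hK⟩ :=
    (ζ : ℝ × ℝ →ₗ[ℝ] ℂ).injective_iff_antilipschitz.mp (centerCoord_injective hω.ne' hb)
  have hbound : ∀ x, ‖x‖ ≤ K * ‖ζ x‖ := ZeroHomClass.bound_of_antilipschitz ζ hK
  have hremainder : (fun z => ζ (v z) - I * ω * ζ (z - z₀)) =o[𝓝 z₀] fun z => ζ (z - z₀) := by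
    refine ((ζ.isBigO_comp _ _).trans_isLittleO (hL.isLittleO.trans_isBigO
      (IsBigO.of_bound K (.of_forall fun z => hbound (z - z₀))))).congr_left fun z => ?_
    simp only [hv₀, sub_zero, map_sub, centerCoord_swapReversibleCLM hωab, mul_sub, ζ]
  obtain ⟨δ, hδ, hnear⟩ := Metric.eventually_nhds_iff.mp (hremainder.def (half_pos hω))
  refine ⟨δ / (K + 1), by positivity, fun z hz => hnear ?_⟩
  calc dist z z₀ = ‖z - z₀‖ := dist_eq_norm z z₀
    _ ≤ K * (δ / (K + 1)) := (hbound _).trans (by gcongr)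
    _ < δ := by
      rw [mul_div_assoc', div_lt_iff₀ (by positivity)]
      linarith [K.coe_nonneg]

theorem exists_lt_swap_eq_of_centerCoord {v : ℝ × ℝ → ℝ × ℝ} {s : Set (ℝ × ℝ)} {z₀ : ℝ × ℝ}
    {a b ω R : ℝ} (hv : ∀ z ∈ s, ContDiffAt ℝ 1 v z) (hz₀ : z₀ ∈ s) (hz₀_swap : z₀.swap = z₀)
    (hv₀ : v z₀ = 0) (hω : 0 < ω) (hb : b ≠ 0)
    (hrem : ∀ z, ‖centerCoord a b ω (z - z₀)‖ ≤ R →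
      ‖centerCoord a b ω (v z) - I * ω * centerCoord a b ω (z - z₀)‖
        ≤ ω / 2 * ‖centerCoord a b ω (z - z₀)‖)
    {γ : ℝ → ℝ × ℝ} (hγ : ∀ t, HasDerivAt γ (v (γ t)) t ∧ γ t ∈ s) (hγ₀ : γ 0 ≠ z₀)
    (hγR : ‖centerCoord a b ω (γ 0 - z₀)‖ * exp (6 * π) < R) :
    ∃ t₁ t₂, t₁ < t₂ ∧ (γ t₁).swap = γ t₁ ∧ (γ t₂).swap = γ t₂ ∧ γ t₁ ≠ γ t₂ := by
  set ζ := centerCoord a b ω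
  have hne : ∀ t, γ t ≠ z₀ := fun t h => hγ₀ <| congrFun (ODE_solution_unique_univ_of_contDiffAt
    hv hγ (δ := fun _ => z₀) (fun _ => ⟨by simpa [hv₀] using hasDerivAt_const _ _, hz₀⟩) h) 0
  have hvγ : Continuous fun t => v (γ t) := continuous_iff_continuousAt.mpr fun t =>
    (hv _ (hγ t).2).continuousAt.comp (hγ t).1.continuousAt
  have hγc : Continuous γ := continuous_iff_continuousAt.mpr fun t => (hγ t).1.continuousAt
  have hswap : ∀ t, (ζ (γ t - z₀)).im = 0 → (γ t).swap = γ t := fun t h => by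
    have := swap_eq_of_im_centerCoord_eq_zero hω.ne' hb h
    rw [← sub_add_cancel (γ t) z₀, Prod.swap_add, this, hz₀_swap]
  obtain ⟨t₁, t₂, hlt, h₁, h₂, hne₁₂⟩ := exists_lt_im_eq_zero_of_hasDerivAt_rotation hω
    (f := fun t => ζ (γ t - z₀)) (E := fun t => ζ (v (γ t)) - I * ω * ζ (γ t - z₀))
    (fun t => (ζ.hasFDerivAt.comp_hasDerivAt t ((hγ t).1.sub_const z₀)).congr_deriv (by ring))
    ((ζ.continuous.comp hvγ).sub
      (continuous_const.mul (ζ.continuous.comp (hγc.sub continuous_const))))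
    (fun t => hrem (γ t))
    (fun t h => hne t <| sub_eq_zero.mp <|
      centerCoord_injective hω.ne' hb (h.trans (map_zero _).symm))
    hγR
  exact ⟨t₁, t₂, hlt, hswap _ h₁, hswap _ h₂, fun h => hne₁₂ (by simp only [h])⟩

theorem exists_periodic_of_swap_reversible {v : ℝ × ℝ → ℝ × ℝ} {s : Set (ℝ × ℝ)} {z₀ : ℝ × ℝ}
    {a b : ℝ} (hs : IsOpen s) (hz₀ : z₀ ∈ s) (hs_swap : ∀ z ∈ s, z.swap ∈ s)
    (hz₀_swap : z₀.swap = z₀) (hv : ∀ z ∈ s, ContDiffAt ℝ 1 v z)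
    (hrev : ∀ z ∈ s, v z.swap = -(v z).swap) (hv₀ : v z₀ = 0)
    (hL : HasFDerivAt v (swapReversibleCLM a b) z₀) (hab : a ^ 2 < b ^ 2) :
    ∃ U, IsOpen U ∧ U ⊆ s ∧ z₀ ∈ U ∧ ∀ γ : ℝ → ℝ × ℝ, (∀ t, γ t ∈ s) →
      (∀ t, HasDerivAt γ (v (γ t)) t) → γ 0 ∈ U → γ 0 ≠ z₀ →
      (∃ T, 0 < T ∧ Function.Periodic γ T) ∧ ∃ t₁ t₂, γ t₁ ≠ γ t₂ := by
  set ω := √(b ^ 2 - a ^ 2)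
  have hω : 0 < ω := sqrt_pos.mpr (by linarith)
  have hωab : ω ^ 2 = b ^ 2 - a ^ 2 := sq_sqrt (by linarith)
  have hb : b ≠ 0 := by rintro rfl; nlinarith
  obtain ⟨R, hR, hrem⟩ := exists_norm_centerCoord_sub_le hv₀ hL hω hb hωab
  refine ⟨{z | ‖centerCoord a b ω (z - z₀)‖ * exp (6 * π) < R} ∩ s,
    (isOpen_lt (by fun_prop) continuous_const).inter hs, inter_subset_right,
    ⟨by simpa using hR, hz₀⟩, fun γ hγs hγ ⟨hγR, _⟩ hγ₀ => ?_⟩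
  have hsol : ∀ t, HasDerivAt γ (v (γ t)) t ∧ γ t ∈ s := fun t => ⟨hγ t, hγs t⟩
  obtain ⟨t₁, t₂, hlt, h₁, h₂, hne⟩ :=
    exists_lt_swap_eq_of_centerCoord hv hz₀ hz₀_swap hv₀ hω hb hrem hsol hγ₀ hγR
  have hreflect : ∀ {t₀}, (γ t₀).swap = γ t₀ → ∀ t, γ t = (γ (2 * t₀ - t)).swap := fun h t => by
    simpa using ODE_solution_eq_comp_reflect hv (σ := ContinuousLinearEquiv.prodComm ℝ ℝ ℝ)
      (by simpa using hs_swap) (by simpa using hrev) hsol (by simpa using h) t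
  exact ⟨⟨_, by linarith, Function.periodic_of_eq_comp_reflect (hreflect h₁) (hreflect h₂)⟩,
    t₁, t₂, hne⟩

noncomputable def monomialRate (p q A B : ℝ) (z : ℝ × ℝ) : ℝ :=
  A * (z.1 ^ p * z.2 ^ q - 1) + B * (z.1 ^ q * z.2 ^ p - 1)

noncomputable def monomialField (p q A B : ℝ) (z : ℝ × ℝ) : ℝ × ℝ :=
  (monomialRate p q A B z, -monomialRate p q A B z.swap)

theorem monomialField_swap (p q A B : ℝ) (z : ℝ × ℝ) :
    monomialField p q A B z.swap = -(monomialField p q A B z).swap := by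
  simp [monomialField]

theorem monomialField_one_one (p q A B : ℝ) : monomialField p q A B (1, 1) = 0 := by
  simp [monomialField, monomialRate]

theorem contDiffAt_monomialField (p q A B : ℝ) {z : ℝ × ℝ} (hz₁ : z.1 ≠ 0) (hz₂ : z.2 ≠ 0) :
    ContDiffAt ℝ 1 (monomialField p q A B) z := by
  unfold monomialField monomialRate
  fun_prop (disch := assumption)

theorem hasFDerivAt_rpow_mul_rpow_one_one (p q : ℝ) :
    HasFDerivAt (fun z : ℝ × ℝ => z.1 ^ p * z.2 ^ q) (p • fst ℝ ℝ ℝ + q • snd ℝ ℝ ℝ) (1, 1) := by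
  have hpow : ∀ r : ℝ, HasDerivAt (fun x : ℝ => x ^ r) r 1 := fun r => by
    simpa using Real.hasDerivAt_rpow_const (x := 1) (p := r) (Or.inl one_ne_zero)
  refine (((hpow p).comp_hasFDerivAt (f := Prod.fst) ((1 : ℝ), (1 : ℝ)) hasFDerivAt_fst).mul
    ((hpow q).comp_hasFDerivAt (f := Prod.snd) ((1 : ℝ), (1 : ℝ)) hasFDerivAt_snd)).congr_fderiv
    ?_
  ext <;> simp

theorem hasFDerivAt_monomialField (p q A B : ℝ) :
    HasFDerivAt (monomialField p q A B)
      (swapReversibleCLM (p * A + q * B) (q * A + p * B)) (1, 1) := by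
  have hrate : HasFDerivAt (monomialRate p q A B)
      ((p * A + q * B) • fst ℝ ℝ ℝ + (q * A + p * B) • snd ℝ ℝ ℝ) (1, 1) := by
    refine ((((hasFDerivAt_rpow_mul_rpow_one_one p q).sub_const 1).const_mul A).add
      (((hasFDerivAt_rpow_mul_rpow_one_one q p).sub_const 1).const_mul B)).congr_fderiv ?_
    ext <;> simp <;> ring
  refine (hrate.prodMk (hrate.comp (1, 1)
    (ContinuousLinearEquiv.prodComm ℝ ℝ ℝ).hasFDerivAt).neg).congr_fderiv ?_
  ext <;> simp

theorem exists_periodic_monomialField {p q A B : ℝ} (hpq : q ^ 2 < p ^ 2) (hAB : A ^ 2 < B ^ 2) :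
    ∃ U, IsOpen U ∧ U ⊆ {z : ℝ × ℝ | 0 < z.1 ∧ 0 < z.2} ∧ ((1, 1) : ℝ × ℝ) ∈ U ∧
      ∀ γ : ℝ → ℝ × ℝ, (∀ t, 0 < (γ t).1 ∧ 0 < (γ t).2) →
        (∀ t, HasDerivAt γ (monomialField p q A B (γ t)) t) → γ 0 ∈ U → γ 0 ≠ (1, 1) →
        (∃ T, 0 < T ∧ Function.Periodic γ T) ∧ ∃ t₁ t₂, γ t₁ ≠ γ t₂ :=
  exists_periodic_of_swap_reversible
    ((isOpen_lt continuous_const continuous_fst).inter (isOpen_lt continuous_const continuous_snd))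
    ⟨one_pos, one_pos⟩ (fun _ hz => ⟨hz.2, hz.1⟩) rfl
    (fun _ hz => contDiffAt_monomialField p q A B hz.1.ne' hz.2.ne')
    (fun z _ => monomialField_swap p q A B z) (monomialField_one_one p q A B)
    (hasFDerivAt_monomialField p q A B)
    (by nlinarith [mul_pos (sub_pos.mpr hpq) (sub_pos.mpr hAB)])

theorem Real.mul_pos_of_sign_eq {x y : ℝ} (h : Real.sign x = Real.sign y) (hx : x ≠ 0) :
    0 < x * y := by
  have hy : y ≠ 0 := fun hy => hx (Real.sign_eq_zero_iff.mp (by simp [h, hy]))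
  have := mul_pos (Real.sign_mul_pos_of_ne_zero x hx) (Real.sign_mul_pos_of_ne_zero y hy)
  rcases Real.sign_apply_eq_of_ne_zero x hx with hs | hs <;> rw [← h, hs] at this <;> linarith

theorem Real.mul_neg_of_sign_eq_neg {x y : ℝ} (h : Real.sign x = -Real.sign y) (hx : x ≠ 0) :
    x * y < 0 := by
  have := Real.mul_pos_of_sign_eq (y := -y) (by rw [Real.sign_neg, h]) hx
  linarith [mul_neg x y]

theorem sq_eq_mul_of_abs_eq_sqrt {r₁ r₂ r₃ : ℝ} (h : 0 < r₂ * r₃)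
    (hgm : |r₁| = √(|r₂| * |r₃|)) : r₁ ^ 2 = r₂ * r₃ := by
  rw [← sq_abs, hgm, ← abs_mul, Real.sq_sqrt (abs_nonneg _), abs_of_pos h]

theorem sq_sub_lt_sq_sub_of_sq_eq_mul {r₁ r₂ r₃ : ℝ} (h₁ : r₁ < 0) (h : r₁ ^ 2 = r₂ * r₃)
    (h₂₃ : |r₃| < |r₂|) : (r₁ - r₃) ^ 2 < (r₂ - r₁) ^ 2 := by
  have hr₂₃ : 0 < r₂ * r₃ := h ▸ sq_pos_of_neg h₁
  have hne : r₂ - r₃ ≠ 0 := fun h' => by rw [sub_eq_zero.mp h'] at h₂₃; exact lt_irrefl _ h₂₃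
  -- `(r₂ + r₃)² - (2r₁)² = (r₂ - r₃)²`: strict AM-GM, needed when `r₂` and `r₃` are negative.
  have hsum : (2 * r₁) ^ 2 < (r₂ + r₃) ^ 2 := by
    nlinarith [pow_pos (abs_pos.mpr hne) 2, sq_abs (r₂ - r₃)]
  suffices 0 < (r₂ - r₃) * (r₂ + r₃ - 2 * r₁) by nlinarith
  rcases (show r₂ ≠ 0 by rintro rfl; simp at hr₂₃).lt_or_gt with hr₂ | hr₂
  · have hr₃ : r₃ < 0 := by nlinarith
    rw [abs_of_neg hr₂, abs_of_neg hr₃] at h₂₃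
    exact mul_pos_of_neg_of_neg (by linarith) (by nlinarith)
  · have hr₃ : 0 < r₃ := by nlinarith
    rw [abs_of_pos hr₂, abs_of_pos hr₃] at h₂₃
    exact mul_pos (by linarith) (by linarith)

theorem threeReactions_coeffs_of_geomMean {c₁ d₁ c₂ d₂ c₃ d₃ lam κ₂ κ₃ : ℝ} (hlam : lam ≠ 0)
    (hκ₂ : κ₂ = lam * (c₃ * d₁ - c₁ * d₃)) (hκ₃ : κ₃ = lam * (c₁ * d₂ - c₂ * d₁))
    (h₁₁ : c₁ * d₁ < 0) (h₃₂ : c₃ * d₂ < 0) (h₂₃ : c₂ * d₃ < 0)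
    (hlt : |d₃ / c₃| < |d₂ / c₂|) (hgm : |d₁ / c₁| = √(|d₂ / c₂| * |d₃ / c₃|)) :
    c₂ * c₃ * d₁ ^ 2 = c₁ ^ 2 * (d₂ * d₃) ∧ (c₂ * κ₂) ^ 2 < (c₃ * κ₃) ^ 2 := by
  have hc₁ : c₁ ≠ 0 := by rintro rfl; simp at h₁₁
  have hc₂ : c₂ ≠ 0 := by rintro rfl; simp at h₂₃
  have hc₃ : c₃ ≠ 0 := by rintro rfl; simp at h₃₂
  have hr₁ : d₁ / c₁ < 0 := by
    rw [← mul_div_mul_left d₁ c₁ hc₁, ← sq]; exact div_neg_of_neg_of_pos h₁₁ (sq_pos_iff.mpr hc₁)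
  have hr₂₃ : 0 < d₂ / c₂ * (d₃ / c₃) := by
    rw [show d₂ / c₂ * (d₃ / c₃) = c₂ * d₃ * (c₃ * d₂) / (c₂ * c₃) ^ 2 by field_simp]
    exact div_pos (mul_pos_of_neg_of_neg h₂₃ h₃₂) (by positivity)
  have hsq := sq_eq_mul_of_abs_eq_sqrt hr₂₃ hgm
  refine ⟨by field_simp at hsq; linear_combination hsq, ?_⟩
  have hA : c₂ * κ₂ = lam * c₁ * c₂ * c₃ * (d₁ / c₁ - d₃ / c₃) := by rw [hκ₂]; field_simp
  have hB : c₃ * κ₃ = lam * c₁ * c₂ * c₃ * (d₂ / c₂ - d₁ / c₁) := by rw [hκ₃]; field_simp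
  rw [hA, hB, mul_pow (lam * c₁ * c₂ * c₃), mul_pow (lam * c₁ * c₂ * c₃)]
  exact mul_lt_mul_of_pos_left (sq_sub_lt_sq_sub_of_sq_eq_mul hr₁ hsq hlt)
    (sq_pos_iff.mpr (by simp [*] : lam * c₁ * c₂ * c₃ ≠ 0))

theorem threeReactions_coeffs {c₁ d₁ c₂ d₂ c₃ d₃ lam κ₂ κ₃ : ℝ} (hlam : lam ≠ 0)
    (hκ₂ : κ₂ = lam * (c₃ * d₁ - c₁ * d₃)) (hκ₃ : κ₃ = lam * (c₁ * d₂ - c₂ * d₁))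
    (hii₁ : Real.sign c₁ = -Real.sign d₁) (hii₂ : Real.sign c₁ = Real.sign d₂)
    (hii₃ : Real.sign c₁ = -Real.sign c₃) (hii₄ : Real.sign c₁ ≠ 0)
    (hiii : Real.sign c₂ = -Real.sign d₃)
    (hcase : Real.sign c₂ ≠ 0 →
      |d₃ / c₃| < |d₁ / c₁| ∧ |d₁ / c₁| < |d₂ / c₂| ∧
      |d₁ / c₁| = √(|d₂ / c₂| * |d₃ / c₃|)) :
    c₂ * c₃ * d₁ ^ 2 = c₁ ^ 2 * (d₂ * d₃) ∧ (c₂ * κ₂) ^ 2 < (c₃ * κ₃) ^ 2 := by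
  have hc₁ : c₁ ≠ 0 := mt Real.sign_eq_zero_iff.mpr hii₄
  have h₁₂ := Real.mul_pos_of_sign_eq hii₂ hc₁
  have h₁₃ := Real.mul_neg_of_sign_eq_neg hii₃ hc₁
  rcases eq_or_ne c₂ 0 with hc₂ | hc₂
  · have hd₃ : d₃ = 0 := Real.sign_eq_zero_iff.mp (by simpa [hc₂] using hiii)
    have hc₃ : c₃ ≠ 0 := by rintro rfl; simp at h₁₃
    have hd₂ : d₂ ≠ 0 := by rintro rfl; simp at h₁₂
    subst hc₂ hd₃ hκ₂ hκ₃
    refine ⟨by ring, ?_⟩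
    simpa using sq_pos_iff.mpr (by simp [*] : c₃ * (lam * (c₁ * d₂)) ≠ 0)
  · obtain ⟨h₃₁, h₁₂', hgm⟩ := hcase (mt Real.sign_eq_zero_iff.mp hc₂)
    exact threeReactions_coeffs_of_geomMean hlam hκ₂ hκ₃ (Real.mul_neg_of_sign_eq_neg hii₁ hc₁)
      (by nlinarith [mul_neg_of_pos_of_neg h₁₂ h₁₃, sq_pos_iff.mpr hc₁])
      (Real.mul_neg_of_sign_eq_neg hiii hc₂) (h₃₁.trans h₁₂') hgm

theorem threeReactions_field_eq_monomialField {p q c₁ d₁ c₂ d₂ c₃ d₃ K lam κ₁ κ₂ κ₃ : ℝ}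
    (hκ₁ : κ₁ = lam * (c₂ * d₃ - c₃ * d₂)) (hκ₂ : κ₂ = lam * (c₃ * d₁ - c₁ * d₃))
    (hκ₃ : κ₃ = lam * (c₁ * d₂ - c₂ * d₁)) (hK : K * d₁ = -c₁) (hd₁ : d₁ ≠ 0)
    (hkey : c₂ * c₃ * d₁ ^ 2 = c₁ ^ 2 * (d₂ * d₃)) (z : ℝ × ℝ) :
    (c₁ * κ₁ + c₂ * κ₂ * z.1 ^ p * z.2 ^ q + c₃ * κ₃ * z.1 ^ q * z.2 ^ p,
      K * (d₁ * κ₁ + d₂ * κ₂ * z.1 ^ p * z.2 ^ q + d₃ * κ₃ * z.1 ^ q * z.2 ^ p))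
      = monomialField p q (c₂ * κ₂) (c₃ * κ₃) z := by
  simp only [monomialField, monomialRate, Prod.fst_swap, Prod.snd_swap, Prod.mk.injEq]
  subst hκ₁ hκ₂ hκ₃
  refine ⟨by ring, mul_left_cancel₀ hd₁ ?_⟩
  linear_combination (d₁ * (lam * (c₂ * d₃ - c₃ * d₂))
      + d₂ * (lam * (c₃ * d₁ - c₁ * d₃)) * z.1 ^ p * z.2 ^ q
      + d₃ * (lam * (c₁ * d₂ - c₂ * d₁)) * z.1 ^ q * z.2 ^ p) * hK
    + lam * (z.1 ^ q * z.2 ^ p - z.1 ^ p * z.2 ^ q) * hkey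

/-- Sufficient sign conditions for (1,1) to be a center of the scaled
three-reaction system with exponent points (0,0), (p,q), (q,p). -/
theorem three_reactions_reversible_center_corollary
    (p q c₁ d₁ c₂ d₂ c₃ d₃ K lam : ℝ) (hlam : lam ≠ 0)
    (κ₁ κ₂ κ₃ : ℝ)
    (hκ₁ : κ₁ = lam * (c₂ * d₃ - c₃ * d₂))
    (hκ₂ : κ₂ = lam * (c₃ * d₁ - c₁ * d₃))
    (hκ₃ : κ₃ = lam * (c₁ * d₂ - c₂ * d₁))
    (hi : p ^ 2 > q ^ 2)
    (hii₁ : Real.sign c₁ = -Real.sign d₁)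
    (hii₂ : Real.sign c₁ = Real.sign d₂)
    (hii₃ : Real.sign c₁ = -Real.sign c₃)
    (hii₄ : Real.sign c₁ ≠ 0)
    (hiii : Real.sign c₂ = -Real.sign d₃)
    (hiv : K = -(c₁ / d₁))
    (hcase : Real.sign c₂ ≠ 0 →
      |d₃ / c₃| < |d₁ / c₁| ∧ |d₁ / c₁| < |d₂ / c₂| ∧
      |d₁ / c₁| = Real.sqrt (|d₂ / c₂| * |d₃ / c₃|)) :
    ∃ U : Set (ℝ × ℝ), IsOpen U ∧ U ⊆ {z : ℝ × ℝ | 0 < z.1 ∧ 0 < z.2} ∧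
      ((1, 1) : ℝ × ℝ) ∈ U ∧
      ∀ γ : ℝ → ℝ × ℝ,
        (∀ t : ℝ, 0 < (γ t).1 ∧ 0 < (γ t).2) →
        (∀ t : ℝ, HasDerivAt γ
          (c₁ * κ₁ + c₂ * κ₂ * (γ t).1 ^ p * (γ t).2 ^ q
             + c₃ * κ₃ * (γ t).1 ^ q * (γ t).2 ^ p,
           K * (d₁ * κ₁ + d₂ * κ₂ * (γ t).1 ^ p * (γ t).2 ^ q
             + d₃ * κ₃ * (γ t).1 ^ q * (γ t).2 ^ p)) t) →
        γ 0 ∈ U → γ 0 ≠ ((1, 1) : ℝ × ℝ) →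
        (∃ T : ℝ, 0 < T ∧ ∀ t : ℝ, γ (t + T) = γ t) ∧ (∃ s t : ℝ, γ s ≠ γ t) := by
  obtain ⟨hkey, hAB⟩ := threeReactions_coeffs hlam hκ₂ hκ₃ hii₁ hii₂ hii₃ hii₄ hiii hcase
  have hd₁ : d₁ ≠ 0 := fun h => hii₄ (by simpa [h] using hii₁)
  have hfield := threeReactions_field_eq_monomialField (p := p) (q := q) (K := K) hκ₁ hκ₂ hκ₃
    (by rw [hiv, neg_mul, div_mul_cancel₀ _ hd₁]) hd₁ hkey
  obtain ⟨U, hU, hUs, hU₁, hper⟩ := exists_periodic_monomialField hi hAB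
  exact ⟨U, hU, hUs, hU₁, fun γ hγ hγ' => hper γ hγ fun t => hfield (γ t) ▸ hγ' t⟩
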